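/- Suppose d ≠ 0 and r ≥ (1 + d/b^R)·max{1, e^{-Td}}. Then φ'(t) ≥ 0 for all t ∈ [0,T], i.e., φ is monotone non-decreasing on [0,T]. -/

import Mathlib

/-!
Write `s = T - t ∈ [0, T]`. Since `exp (-(bR + d) s) = exp (-bR s) exp (-d s)`, the derivative of `φ`
is `bR exp (-bR s) (1 - (1 + d / bR) exp (-d s) / r)`. The function `s ↦ exp (-d s)` is monotone, so
on `[0, T]` it is bounded by its larger endpoint value `max 1 (exp (-T d))`, and the hypothesis on `r`
makes the bracket nonnegative.
-/

open Real Set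

lemma exp_mul_le_max_one_exp_mul (c : ℝ) {s T : ℝ} (hs : s ∈ Icc 0 T) :
    exp (c * s) ≤ max 1 (exp (c * T)) := by
  rcases le_total 0 c with hc | hc
  · exact (exp_le_exp.2 (mul_le_mul_of_nonneg_left hs.2 hc)).trans (le_max_right _ _)
  · exact (exp_le_one_iff.2 (mul_nonpos_of_nonpos_of_nonneg hc hs.1)).trans (le_max_left _ _)

lemma one_add_div_mul_exp_le {T bR r d s : ℝ} (hr : 0 < r)
    (hhyp : (1 + d / bR) * max 1 (exp (-T * d)) ≤ r) (hs : s ∈ Icc 0 T) :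
    (1 + d / bR) * exp (-d * s) ≤ r := by
  rcases le_total 0 (1 + d / bR) with hk | hk
  · calc (1 + d / bR) * exp (-d * s) ≤ (1 + d / bR) * max 1 (exp (-T * d)) := by
          rw [show -T * d = -d * T by ring]
          exact mul_le_mul_of_nonneg_left (exp_mul_le_max_one_exp_mul (-d) hs) hk
      _ ≤ r := hhyp
  · exact (mul_nonpos_of_nonpos_of_nonneg hk (exp_pos _).le).trans hr.le

lemma phi_deriv_nonneg {T bR r d t : ℝ} (hbR : 0 < bR) (hr : 0 < r)
    (hhyp : (1 + d / bR) * max 1 (exp (-T * d)) ≤ r) (ht : t ∈ Icc 0 T) :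
    0 ≤ bR * exp (-bR * (T - t)) - (bR + d) / r * exp (-(bR + d) * (T - t)) := by
  have hs : T - t ∈ Icc 0 T := ⟨by linarith [ht.2], by linarith [ht.1]⟩
  have hbound : (1 + d / bR) * exp (-d * (T - t)) / r ≤ 1 :=
    (div_le_one hr).2 (one_add_div_mul_exp_le hr hhyp hs)
  have hfactor : bR * exp (-bR * (T - t)) - (bR + d) / r * exp (-(bR + d) * (T - t)) =
      bR * exp (-bR * (T - t)) * (1 - (1 + d / bR) * exp (-d * (T - t)) / r) := by
    rw [show -(bR + d) * (T - t) = -bR * (T - t) + -d * (T - t) by ring, exp_add]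
    field_simp
  rw [hfactor]
  exact mul_nonneg (mul_pos hbR (exp_pos _)).le (sub_nonneg.2 hbound)

lemma hasDerivAt_exp_neg_mul_sub (a T x : ℝ) :
    HasDerivAt (fun t : ℝ => exp (-a * (T - t))) (a * exp (-a * (T - x))) x := by
  have hlin : HasDerivAt (fun t : ℝ => -a * (T - t)) a x := by
    simpa using ((hasDerivAt_id x).const_sub T).const_mul (-a)
  simpa [mul_comm] using hlin.exp

theorem phi_monotone_increasing_general (T bR r d : ℝ) (hbR : 0 < bR) (hr : 0 < r)
    (hhyp : (1 + d / bR) * max 1 (Real.exp (-T * d)) ≤ r) :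
    (∀ t ∈ Set.Icc (0 : ℝ) T,
      0 ≤ bR * Real.exp (-bR * (T - t)) - (bR + d) / r * Real.exp (-(bR + d) * (T - t))) ∧
    MonotoneOn
      (fun t : ℝ => Real.exp (-bR * (T - t)) - (1 / r) * Real.exp (-(bR + d) * (T - t)))
      (Set.Icc 0 T) := by
  have hderiv_nonneg := fun t (ht : t ∈ Icc 0 T) => phi_deriv_nonneg hbR hr hhyp ht
  refine ⟨hderiv_nonneg, monotoneOn_of_hasDerivWithinAt_nonneg (convex_Icc 0 T)
    (by fun_prop) (fun x _ => ?_) (fun x hx => hderiv_nonneg x (interior_subset hx))⟩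
  have hφ := (hasDerivAt_exp_neg_mul_sub bR T x).sub
    ((hasDerivAt_exp_neg_mul_sub (bR + d) T x).const_mul (1 / r))
  exact (hφ.congr_deriv (by ring)).hasDerivWithinAt

theorem phi_monotone_increasing (T bR r d : ℝ) (hT : 0 < T) (hbR : 0 < bR) (hr : 0 < r)
    (hd : d ≠ 0) (hhyp : (1 + d / bR) * max 1 (Real.exp (-T * d)) ≤ r) :
    (∀ t ∈ Set.Icc (0 : ℝ) T,
      0 ≤ bR * Real.exp (-bR * (T - t)) - (bR + d) / r * Real.exp (-(bR + d) * (T - t))) ∧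
    MonotoneOn
      (fun t : ℝ => Real.exp (-bR * (T - t)) - (1 / r) * Real.exp (-(bR + d) * (T - t)))
      (Set.Icc 0 T) :=
  phi_monotone_increasing_general T bR r d hbR hr hhyp
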